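/- arXiv:1210.1350 — 6 statements merged into one kernel-verified Lean document; each statement's English description precedes it below -/
import Mathlib

section
/- Let I be an ideal on ℕ, (sₙ) an I-bounded real sequence that is I-convergent to a, and (tₙ) an I-bounded real sequence. Then I-limsup(sₙ + tₙ) = a + I-limsup tₙ. -/
/-- An ideal on ℕ: nonempty collection of subsets, not containing ℕ,
closed under subsets and finite unions. -/
def IsIdeal (I : Set (Set ℕ)) : Prop :=
  I.Nonempty ∧ Set.univ ∉ I ∧ (∀ A ∈ I, ∀ B, B ⊆ A → B ∈ I) ∧ ∀ A ∈ I, ∀ B ∈ I, A ∪ B ∈ I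

/-- Convergence of `g n i` to `g0 i` along the ideal `I`, uniformly in `i ∈ S`. -/
def UnifConvAlong {S : Type*} (I : Set (Set ℕ)) (g : ℕ → S → ℝ) (g0 : S → ℝ) : Prop :=
  ∀ ε > 0, ∃ E ∈ I, ∀ i : S, {n : ℕ | ε ≤ |g n i - g0 i|} ⊆ E

/-- The collection `J_{B,I}` of sets `K ⊆ ℕ` whose matrix transforms tend to 0 along `I`
uniformly in `i ∈ S`. -/
def matIdeal {S : Type*} (I : Set (Set ℕ)) (b : S → ℕ → ℕ → ℝ) : Set (Set ℕ) :=
  {K : Set ℕ | UnifConvAlong I (fun n i => ∑' k, b i n k * K.indicator 1 k) (fun _ => 0)}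

/-- `I`-limit superior of a real sequence. -/
noncomputable def idealLimSup (I : Set (Set ℕ)) (s : ℕ → ℝ) : ℝ :=
  sSup {t : ℝ | {n : ℕ | t < s n} ∉ I}

/-- `I`-limit inferior of a real sequence. -/
noncomputable def idealLimInf (I : Set (Set ℕ)) (s : ℕ → ℝ) : ℝ :=
  sInf {t : ℝ | {n : ℕ | s n < t} ∉ I}

/-- `I`-convergence of a real sequence to `a`. -/
def IdealConv (I : Set (Set ℕ)) (s : ℕ → ℝ) (a : ℝ) : Prop :=
  ∀ ε > 0, {n : ℕ | ε ≤ |s n - a|} ∈ I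

/-- `B^I`-statistical convergence of `s` to `a`. -/
def BStatConv {S : Type*} (I : Set (Set ℕ)) (b : S → ℕ → ℕ → ℝ) (s : ℕ → ℝ) (a : ℝ) : Prop :=
  ∀ ε > 0, UnifConvAlong I
    (fun n i => ∑' k, b i n k * Set.indicator {k : ℕ | ε ≤ |s k - a|} 1 k) (fun _ => 0)

lemma setA_nonempty (I : Set (Set ℕ)) (hI : IsIdeal I) (u : ℕ → ℝ)
    (hu : ∃ K > (0 : ℝ), {n : ℕ | K < |u n|} ∈ I) :
    ({x : ℝ | {n : ℕ | x < u n} ∉ I}).Nonempty := by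
  obtain ⟨K, hK, hKI⟩ := hu
  refine ⟨-(K + 1), fun h => ?_⟩
  apply hI.2.1
  apply hI.2.2.1 _ (hI.2.2.2 _ h _ hKI)
  intro n _
  by_cases hn : -(K + 1) < u n
  · exact Or.inl hn
  · right
    push_neg at hn
    have : K + 1 ≤ |u n| := le_trans (by linarith) (neg_le_abs (u n))
    exact lt_of_lt_of_le (by linarith) this

lemma setA_bddAbove (I : Set (Set ℕ)) (hI : IsIdeal I) (u : ℕ → ℝ)
    (hu : ∃ K > (0 : ℝ), {n : ℕ | K < |u n|} ∈ I) :
    BddAbove {x : ℝ | {n : ℕ | x < u n} ∉ I} := by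
  obtain ⟨K, _, hKI⟩ := hu
  refine ⟨K, fun x hx => ?_⟩
  by_contra hxK
  push_neg at hxK
  apply hx
  apply hI.2.2.1 _ hKI
  intro n hn
  simp only [Set.mem_setOf_eq] at hn ⊢
  exact lt_of_lt_of_le (lt_trans hxK hn) (le_abs_self _)

lemma key_lemma (I : Set (Set ℕ)) (hI : IsIdeal I) (s : ℕ → ℝ) (a : ℝ)
    (hconv : IdealConv I s a) (u : ℕ → ℝ) (x ε : ℝ) (hε : 0 < ε)
    (hx : {n : ℕ | x < u n} ∉ I) : {n : ℕ | x + a - ε < s n + u n} ∉ I := by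
  intro h
  apply hx
  have hE : {n : ℕ | ε ≤ |s n - a|} ∈ I := hconv ε hε
  apply hI.2.2.1 _ (hI.2.2.2 _ h _ hE)
  intro n hn
  simp only [Set.mem_setOf_eq] at hn ⊢
  by_cases he : ε ≤ |s n - a|
  · exact Or.inr he
  · refine Or.inl ?_
    push_neg at he
    rw [abs_lt] at he
    obtain ⟨he1, he2⟩ := he
    show x + a - ε < s n + u n
    linarith

/-- If `s` is I-bounded and I-convergent to `a` and `t` is I-bounded, then
`I-limsup (s + t) = a + I-limsup t`. -/
theorem stmt2 (I : Set (Set ℕ)) (hI : IsIdeal I) (s t : ℕ → ℝ) (a : ℝ)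
    (hs : ∃ K > (0 : ℝ), {n : ℕ | K < |s n|} ∈ I)
    (ht : ∃ K > (0 : ℝ), {n : ℕ | K < |t n|} ∈ I)
    (hconv : IdealConv I s a) :
    idealLimSup I (fun n => s n + t n) = a + idealLimSup I t := by
  obtain ⟨Ks, hKs, hKsI⟩ := hs
  obtain ⟨Kt, hKt, hKtI⟩ := ht
  have hst : ∃ K > (0 : ℝ), {n : ℕ | K < |s n + t n|} ∈ I := by
    refine ⟨Ks + Kt, by linarith, ?_⟩
    apply hI.2.2.1 _ (hI.2.2.2 _ hKsI _ hKtI)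
    intro n hn
    simp only [Set.mem_setOf_eq] at hn ⊢
    by_contra hc
    simp only [Set.mem_union, Set.mem_setOf_eq] at hc
    push_neg at hc
    have h1 : |s n + t n| ≤ |s n| + |t n| := abs_add_le _ _
    rcases hc with ⟨h2, h3⟩
    linarith
  have hA_ne := setA_nonempty I hI (fun n => s n + t n) hst
  have hA_bdd := setA_bddAbove I hI (fun n => s n + t n) hst
  have hB_ne := setA_nonempty I hI t ⟨Kt, hKt, hKtI⟩
  have hB_bdd := setA_bddAbove I hI t ⟨Kt, hKt, hKtI⟩
  have hconv' : IdealConv I (fun n => -s n) (-a) := by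
    intro ε hε
    have := hconv ε hε
    have heq : {n : ℕ | ε ≤ |(fun n => -s n) n - -a|} = {n : ℕ | ε ≤ |s n - a|} := by
      ext n
      simp only [Set.mem_setOf_eq]
      rw [show -s n - -a = -(s n - a) by ring, abs_neg]
    rw [heq]
    exact this
  unfold idealLimSup
  apply le_antisymm
  · -- sSup A ≤ a + sSup B
    apply le_of_forall_pos_le_add
    intro ε hε
    have h1 : ∀ x ∈ {x : ℝ | {n : ℕ | x < s n + t n} ∉ I}, x ≤ a + sSup {x : ℝ | {n : ℕ | x < t n} ∉ I} + ε := by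
      intro x hx
      have := key_lemma I hI (fun n => -s n) (-a) hconv' (fun n => s n + t n) x ε hε hx
      have heq : {n : ℕ | x + -a - ε < (fun n => -s n) n + (fun n => s n + t n) n}
          = {n : ℕ | x - a - ε < t n} := by
        ext n; simp only [Set.mem_setOf_eq]
        constructor <;> intro h <;> linarith
      rw [heq] at this
      have := le_csSup hB_bdd this
      linarith
    have := csSup_le hA_ne h1
    linarith
  · -- a + sSup B ≤ sSup A
    apply le_of_forall_pos_le_add
    intro ε hε
    have h1 : ∀ x ∈ {x : ℝ | {n : ℕ | x < t n} ∉ I}, x ≤ sSup {x : ℝ | {n : ℕ | x < s n + t n} ∉ I} + ε - a := by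
      intro x hx
      have := key_lemma I hI s a hconv t x ε hε hx
      have := le_csSup hA_bdd this
      linarith
    have := csSup_le hB_ne h1
    linarith
end

section
/- Let I be an ideal on ℕ, S nonempty, and B = (B_i)_{i∈S} a family of matrices with Σ_k |b_{nk}^{(i)}| < ∞ for all n, i; suppose (1) there exists A ∈ I with M := sup{Σ_k |b_{nk}^{(i)}| : n ∈ ℕ\A, i ∈ S} < ∞, (2) for every bounded real sequence (a_k) with {k : a_k ≠ 0} ∈ I, the sums Σ_k b_{nk}^{(i)} a_k converge to 0 along I uniformly in i ∈ S, and (3) Σ_k b_{nk}^{(i)} → 1 along I uniformly in i ∈ S. Then every bounded real sequence (s_n) with I-lim s_n = a is B^I-summable to a, i.e., Σ_k b_{nk}^{(i)} s_k → a along I uniformly in i ∈ S. -/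
set_option maxHeartbeats 1000000 in
/-- A Toeplitz-type consistency result: under conditions (2.1)–(2.3), every bounded
`I`-convergent sequence is `B^I`-summable to the same limit. -/
theorem stmt7 {S : Type*} [Nonempty S] (I : Set (Set ℕ)) (hI : IsIdeal I)
    (b : S → ℕ → ℕ → ℝ)
    (habs : ∀ (i : S) (n : ℕ), Summable fun k => |b i n k|)
    (hM : ∃ A ∈ I, ∃ M : ℝ, ∀ (i : S), ∀ n ∉ A, ∑' k, |b i n k| ≤ M)
    (hd : ∀ a : ℕ → ℝ, (∃ C : ℝ, ∀ k, |a k| ≤ C) → {k : ℕ | a k ≠ 0} ∈ I →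
      UnifConvAlong I (fun n i => ∑' k, b i n k * a k) (fun _ => 0))
    (h1 : UnifConvAlong I (fun n i => ∑' k, b i n k) (fun _ => 1))
    (s : ℕ → ℝ) (hbdd : ∃ R : ℝ, ∀ n, |s n| ≤ R) (a : ℝ)
    (hconv : IdealConv I s a) :
    UnifConvAlong I (fun n i => ∑' k, b i n k * s k) (fun _ => a) := by
  obtain ⟨A, hA, M, hMA⟩ := hM
  obtain ⟨R, hR⟩ := hbdd
  obtain ⟨hne, huniv, hsub, hunion⟩ := hI
  have hM0 : 0 ≤ M := by
    have hAne : Aᶜ.Nonempty := by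
      rw [Set.nonempty_compl]
      rintro rfl; exact huniv hA
    obtain ⟨n, hn⟩ := hAne
    obtain ⟨i⟩ := ‹Nonempty S›
    exact le_trans (tsum_nonneg fun k => abs_nonneg _) (hMA i n hn)
  intro ε hε
  set ε' := ε / (3 * (M + 1)) with hε'def
  have hε'pos : 0 < ε' := by positivity
  set K := {k : ℕ | ε' ≤ |s k - a|} with hKdef
  have hKI : K ∈ I := hconv ε' hε'pos
  set aa : ℕ → ℝ := K.indicator (fun k => s k - a) with haa
  set cc : ℕ → ℝ := Kᶜ.indicator (fun k => s k - a) with hcc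
  have haabd : ∀ k, |aa k| ≤ R + |a| := by
    intro k
    rw [haa, Set.indicator]
    split
    · calc |s k - a| ≤ |s k| + |a| := by
            simpa [sub_eq_add_neg] using abs_add_le (s k) (-a)
        _ ≤ R + |a| := by linarith [hR k]
    · simp only [abs_zero]
      have h0 := (abs_nonneg (s 0)).trans (hR 0)
      have := abs_nonneg a
      linarith
  have hccbd : ∀ k, |cc k| ≤ ε' := by
    intro k
    rw [hcc, Set.indicator]
    split
    · next h =>
      have : ¬ (ε' ≤ |s k - a|) := h
      linarith [not_le.mp this]
    · simpa using hε'pos.le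
  have haasupp : {k : ℕ | aa k ≠ 0} ∈ I := by
    refine hsub K hKI _ ?_
    intro k hk
    by_contra hkK
    exact hk (Set.indicator_of_notMem hkK _)
  have h2 := hd aa ⟨R + |a|, haabd⟩ haasupp (ε/3) (by positivity)
  obtain ⟨E1, hE1I, hE1⟩ := h2
  set δ := ε / (3 * (|a| + 1)) with hδdef
  have hδpos : 0 < δ := by positivity
  obtain ⟨E2, hE2I, hE2⟩ := h1 δ hδpos
  refine ⟨(A ∪ E1) ∪ E2, hunion _ (hunion _ hA _ hE1I) _ hE2I, ?_⟩
  intro i n hn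
  by_contra hnE
  simp only [Set.mem_union, not_or] at hnE
  obtain ⟨⟨hnA, hnE1⟩, hnE2⟩ := hnE
  simp only [Set.mem_setOf_eq] at hn
  -- summability facts
  have hsummul : ∀ (c : ℕ → ℝ) (C : ℝ), (∀ k, |c k| ≤ C) →
      Summable fun k => b i n k * c k := by
    intro c C hC
    refine Summable.of_abs (Summable.of_nonneg_of_le (fun k => abs_nonneg _)
      (fun k => ?_) ((habs i n).mul_right C))
    rw [abs_mul]
    exact mul_le_mul_of_nonneg_left (hC k) (abs_nonneg _)
  have hSa : Summable fun k => b i n k * a := hsummul _ |a| (fun k => le_of_eq rfl)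
  have hSaa : Summable fun k => b i n k * aa k := hsummul _ _ haabd
  have hScc : Summable fun k => b i n k * cc k := hsummul _ _ hccbd
  -- decomposition
  have hdecomp : (fun k => b i n k * s k)
      = fun k => b i n k * a + (b i n k * aa k + b i n k * cc k) := by
    funext k
    rw [haa, hcc]
    by_cases hk : k ∈ K
    · rw [Set.indicator_of_mem hk, Set.indicator_of_notMem (by simpa using hk)]
      ring
    · rw [Set.indicator_of_notMem hk, Set.indicator_of_mem (by simpa using hk)]
      ring
  have htsum : ∑' k, b i n k * s k
      = (∑' k, b i n k * a) + ((∑' k, b i n k * aa k) + (∑' k, b i n k * cc k)) := by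
    rw [hdecomp]
    rw [Summable.tsum_add hSa (hSaa.add hScc), Summable.tsum_add hSaa hScc]
  have hta : ∑' k, b i n k * a = (∑' k, b i n k) * a := tsum_mul_right
  -- bounds
  have hb1 : |(∑' k, b i n k * a) - a| ≤ ε / 3 := by
    rw [hta]
    have h2 : |∑' k, b i n k - 1| < δ := by
      have := hE2 i
      have hnn : n ∉ {m : ℕ | δ ≤ |(fun n i => ∑' k, b i n k) m i - (fun _ => (1:ℝ)) i|} := by
        intro hmem; exact hnE2 (this hmem)
      simpa using not_le.mp hnn
    calc |(∑' k, b i n k) * a - a| = |a| * |∑' k, b i n k - 1| := by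
          rw [← abs_mul]; ring_nf
      _ ≤ |a| * δ := mul_le_mul_of_nonneg_left h2.le (abs_nonneg _)
      _ ≤ ε / 3 := by
          rw [hδdef, ← mul_div_assoc, div_le_div_iff₀ (by positivity) (by norm_num : (0:ℝ) < 3)]
          nlinarith [abs_nonneg a, hε]
  have hb2 : |∑' k, b i n k * aa k| < ε / 3 := by
    have := hE1 i
    have hnn : n ∉ {m : ℕ | ε/3 ≤ |(fun n i => ∑' k, b i n k * aa k) m i - (fun _ => (0:ℝ)) i|} := by
      intro hmem; exact hnE1 (this hmem)
    simp only [Set.mem_setOf_eq, sub_zero, not_le] at hnn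
    exact hnn
  have hb3 : |∑' k, b i n k * cc k| ≤ ε / 3 := by
    have hsumnorm : Summable fun k => ‖b i n k * cc k‖ := by
      simpa only [Real.norm_eq_abs] using hScc.abs
    have habs' : |∑' k, b i n k * cc k| ≤ ∑' k, |b i n k * cc k| := by
      have h := norm_tsum_le_tsum_norm hsumnorm
      simpa only [Real.norm_eq_abs] using h
    have hcomp : ∑' k, |b i n k * cc k| ≤ ∑' k, |b i n k| * ε' := by
      refine Summable.tsum_le_tsum (fun k => ?_) hScc.abs ((habs i n).mul_right ε')
      rw [abs_mul]
      exact mul_le_mul_of_nonneg_left (hccbd k) (abs_nonneg _)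
    have hfin : ∑' k, |b i n k| * ε' = (∑' k, |b i n k|) * ε' := tsum_mul_right
    have hMle : (∑' k, |b i n k|) * ε' ≤ M * ε' :=
      mul_le_mul_of_nonneg_right (hMA i n hnA) hε'pos.le
    have : M * ε' ≤ ε / 3 := by
      rw [hε'def, ← mul_div_assoc, div_le_div_iff₀ (by positivity) (by norm_num : (0:ℝ) < 3)]
      nlinarith
    linarith [habs'.trans (hcomp.trans (hfin.le.trans (hMle.trans this)))]
  have : |(∑' k, b i n k * s k) - a| < ε := by
    rw [htsum]
    calc |(∑' k, b i n k * a) + ((∑' k, b i n k * aa k) + (∑' k, b i n k * cc k)) - a|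
        ≤ |(∑' k, b i n k * a) - a| + |∑' k, b i n k * aa k| + |∑' k, b i n k * cc k| := by
          have := abs_add_le ((∑' k, b i n k * a) - a + (∑' k, b i n k * aa k)) (∑' k, b i n k * cc k)
          have h2 := abs_add_le ((∑' k, b i n k * a) - a) (∑' k, b i n k * aa k)
          have heq : (∑' k, b i n k * a) + ((∑' k, b i n k * aa k) + (∑' k, b i n k * cc k)) - a
            = ((∑' k, b i n k * a) - a + (∑' k, b i n k * aa k)) + (∑' k, b i n k * cc k) := by ring
          rw [heq]
          linarith
      _ < ε / 3 + ε / 3 + ε / 3 := by linarith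
      _ = ε := by ring
  linarith
end

section
/- Let I and J be ideals on ℕ and A = (a_{nk}) an infinite real matrix with Σ_k |a_{nk}| < ∞ for all n, I-lim Σ_k |a_{nk}| = 1 = I-lim Σ_k a_{nk}, and I-lim Σ_k |a_{nk}| χ_E(k) = 0 for every E ∈ J. Then for every bounded real sequence s = (s_n), I-limsup (As)(n) ≤ J-limsup s_n, where (As)(n) = Σ_k a_{nk} s_k. -/
/-!
Fix `t` above `J-limsup s`, pick `u` strictly between, and let `K = {k | u < s k}`, so `K ∈ J`.
Splitting `a = a⁺ - a⁻` and bounding `s k` by `u` off `K`, by `R` on `K`, and from below by `-R`,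
gives termwise `a s ≤ a⁺ u + a⁻ R + (R + |u|) |a| χ_K`, hence
`(As)(n) ≤ (u + R)/2 ∑ |a_{nk}| + (u - R)/2 ∑ a_{nk} + (R + |u|) ∑ |a_{nk}| χ_K(k)`.
The right side `I`-converges to `u < t`, so `{n | t < (As)(n)} ∈ I`.
Since `sSup ∅ = 0`, the `I`-limsup also needs some `t` with `{n | t < (As)(n)} ∉ I`;
`(As)(n) ≥ -R ∑ |a_{nk}|` and `∑ |a_{nk}| → 1` along `I` provide `t = -R - 1`.
-/

namespace IsIdeal

variable {I : Set (Set ℕ)} {E F : Set ℕ}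

theorem empty_mem (hI : IsIdeal I) : (∅ : Set ℕ) ∈ I :=
  let ⟨A, hA⟩ := hI.1
  hI.2.2.1 A hA ∅ (Set.empty_subset A)

theorem mem_of_subset (hI : IsIdeal I) (hE : E ∈ I) (h : F ⊆ E) : F ∈ I :=
  hI.2.2.1 E hE F h

theorem union_mem (hI : IsIdeal I) (hE : E ∈ I) (hF : F ∈ I) : E ∪ F ∈ I :=
  hI.2.2.2 E hE F hF

theorem notMem_of_union_eq_univ (hI : IsIdeal I) (hE : E ∈ I) (h : F ∪ E = Set.univ) :
    F ∉ I :=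
  fun hF => hI.2.1 (h ▸ hI.union_mem hF hE)

end IsIdeal

namespace IdealConv

variable {I : Set (Set ℕ)} {f g : ℕ → ℝ} {a b : ℝ}

theorem add (hf : IdealConv I f a) (hI : IsIdeal I) (hg : IdealConv I g b) :
    IdealConv I (fun n => f n + g n) (a + b) := by
  intro ε hε
  refine hI.mem_of_subset (hI.union_mem (hf (ε / 2) (half_pos hε)) (hg (ε / 2) (half_pos hε)))
    fun n hn => ?_
  by_contra hc
  simp only [Set.mem_union, Set.mem_ofPred_eq, not_or, not_le] at hc hn
  rw [show f n + g n - (a + b) = (f n - a) + (g n - b) by ring] at hn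
  linarith [abs_add_le (f n - a) (g n - b)]

theorem const_mul (hf : IdealConv I f a) (hI : IsIdeal I) (c : ℝ) :
    IdealConv I (fun n => c * f n) (c * a) := by
  intro ε hε
  refine hI.mem_of_subset (hf (ε / (|c| + 1)) (by positivity)) fun n hn => ?_
  simp only [Set.mem_ofPred_eq, ← mul_sub, abs_mul] at hn ⊢
  rw [div_le_iff₀ (by positivity)]
  nlinarith [abs_nonneg (f n - a)]

theorem setOf_lt_mem_of_le (hg : IdealConv I g a) (hI : IsIdeal I) (hfg : ∀ n, f n ≤ g n)
    {t : ℝ} (ht : a < t) : {n | t < f n} ∈ I :=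
  hI.mem_of_subset (hg (t - a) (sub_pos.2 ht)) fun n hn => by
    simp only [Set.mem_ofPred_eq] at hn ⊢
    linarith [le_abs_self (g n - a), hfg n]

theorem exists_setOf_lt_notMem (hg : IdealConv I g a) (hI : IsIdeal I) (hgf : ∀ n, g n ≤ f n) :
    ∃ t, {n | t < f n} ∉ I := by
  refine ⟨a - 1, hI.notMem_of_union_eq_univ (hg 1 one_pos) (Set.eq_univ_of_forall fun n => ?_)⟩
  by_contra hn
  simp only [Set.mem_union, Set.mem_ofPred_eq, not_or, not_lt, not_le] at hn
  linarith [neg_abs_le (g n - a), hgf n]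

end IdealConv

theorem idealLimSup_le_of_forall_lt {I : Set (Set ℕ)} {x : ℕ → ℝ} {L : ℝ}
    (hne : ∃ t, {n | t < x n} ∉ I) (h : ∀ t, L < t → {n | t < x n} ∈ I) :
    idealLimSup I x ≤ L :=
  csSup_le hne fun t ht => not_lt.1 fun hLt => ht (h t hLt)

theorem setOf_lt_mem_of_idealLimSup_lt {I : Set (Set ℕ)} (hI : IsIdeal I) {s : ℕ → ℝ} {R : ℝ}
    (hR : ∀ n, s n ≤ R) {u : ℝ} (hu : idealLimSup I s < u) : {n | u < s n} ∈ I := by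
  by_contra hu'
  refine hu.not_ge (le_csSup ⟨R, fun t ht => ?_⟩ hu')
  by_contra! hRt
  have hempty : {n | t < s n} = ∅ :=
    Set.eq_empty_of_forall_notMem fun n hn => (lt_trans hRt hn).not_ge (hR n)
  exact ht (hempty ▸ hI.empty_mem)

section Scalar

variable {a s u R : ℝ}

theorem mul_le_of_le_of_neg_le (hsu : s ≤ u) (hRs : -R ≤ s) :
    a * s ≤ (u + R) / 2 * |a| + (u - R) / 2 * a := by
  rcases le_total 0 a with ha | ha
  · rw [abs_of_nonneg ha]; nlinarith
  · rw [abs_of_nonpos ha]; nlinarith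

theorem mul_le_of_abs_le (hs : |s| ≤ R) :
    a * s ≤ (u + R) / 2 * |a| + (u - R) / 2 * a + (R + |u|) * |a| := by
  have hR : a * s ≤ |a| * R :=
    (le_abs_self _).trans (abs_mul a s ▸ mul_le_mul_of_nonneg_left hs (abs_nonneg a))
  have hRu : 0 ≤ R + |u| := add_nonneg ((abs_nonneg s).trans hs) (abs_nonneg u)
  rcases le_total 0 a with ha | ha
  · rw [abs_of_nonneg ha] at hR ⊢; nlinarith [neg_abs_le u]
  · rw [abs_of_nonpos ha] at hR ⊢; nlinarith [mul_nonneg (neg_nonneg.2 ha) hRu]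

end Scalar

section Series

variable {ι : Type*} {a s : ι → ℝ} {R : ℝ}

theorem summable_mul_of_abs_le (ha : Summable fun k => |a k|) (hs : ∀ k, |s k| ≤ R) :
    Summable fun k => a k * s k :=
  (ha.mul_right R).of_norm_bounded fun k => by
    rw [Real.norm_eq_abs, abs_mul]
    exact mul_le_mul_of_nonneg_left (hs k) (abs_nonneg _)

theorem abs_tsum_mul_le (ha : Summable fun k => |a k|) (hs : ∀ k, |s k| ≤ R) :
    |∑' k, a k * s k| ≤ R * ∑' k, |a k| := by
  rw [← tsum_mul_left]
  refine (norm_tsum_le_tsum_norm (summable_mul_of_abs_le ha hs).norm).trans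
    ((summable_mul_of_abs_le ha hs).norm.tsum_le_tsum (fun k => ?_) (ha.mul_left R))
  rw [Real.norm_eq_abs, abs_mul, mul_comm]
  exact mul_le_mul_of_nonneg_right (hs k) (abs_nonneg _)

theorem tsum_mul_le (ha : Summable fun k => |a k|) (hs : ∀ k, |s k| ≤ R) (u : ℝ) :
    ∑' k, a k * s k ≤ (u + R) / 2 * ∑' k, |a k| + (u - R) / 2 * ∑' k, a k
      + (R + |u|) * ∑' k, |a k| * {k | u < s k}.indicator 1 k := by
  have hK : Summable fun k => |a k| * {k | u < s k}.indicator 1 k :=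
    ha.of_nonneg_of_le (fun k => mul_nonneg (abs_nonneg _) (Set.indicator_nonneg (by simp) _))
      fun k => mul_le_of_le_one_right (abs_nonneg _) (Set.indicator_le_self' (by simp) k)
  rw [← tsum_mul_left, ← tsum_mul_left, ← tsum_mul_left,
    ← (ha.mul_left _).tsum_add (ha.of_abs.mul_left _), ← ((ha.mul_left _).add
      (ha.of_abs.mul_left _)).tsum_add (hK.mul_left _)]
  refine (summable_mul_of_abs_le ha hs).tsum_le_tsum (fun k => ?_)
    (((ha.mul_left _).add (ha.of_abs.mul_left _)).add (hK.mul_left _))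
  by_cases hk : u < s k
  · simpa [Set.indicator_of_mem (show k ∈ {k | u < s k} from hk)] using mul_le_of_abs_le (hs k)
  · simpa [Set.indicator_of_notMem (show k ∉ {k | u < s k} from hk)] using
      mul_le_of_le_of_neg_le (not_lt.1 hk) (neg_le_of_abs_le (hs k))

end Series

/-- `I-limsup (As) ≤ J-limsup s` for bounded `s`, under conditions (3.1)–(3.3). -/
theorem stmt8 (I J : Set (Set ℕ)) (hI : IsIdeal I) (hJ : IsIdeal J)
    (A : ℕ → ℕ → ℝ) (habs : ∀ n, Summable fun k => |A n k|)
    (h1 : IdealConv I (fun n => ∑' k, |A n k|) 1)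
    (h2 : IdealConv I (fun n => ∑' k, A n k) 1)
    (h3 : ∀ E ∈ J, IdealConv I (fun n => ∑' k, |A n k| * E.indicator 1 k) 0)
    (s : ℕ → ℝ) (hbdd : ∃ R : ℝ, ∀ n, |s n| ≤ R) :
    idealLimSup I (fun n => ∑' k, A n k * s k) ≤ idealLimSup J s := by
  obtain ⟨R, hR⟩ := hbdd
  refine idealLimSup_le_of_forall_lt ?_ fun t ht => ?_
  · refine (h1.const_mul hI (-R)).exists_setOf_lt_notMem hI fun n => ?_
    rw [neg_mul]
    exact neg_le_of_abs_le (abs_tsum_mul_le (habs n) hR)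
  · obtain ⟨u, hLu, hut⟩ := exists_between ht
    have hK := setOf_lt_mem_of_idealLimSup_lt hJ (fun n => (le_abs_self _).trans (hR n)) hLu
    have hconv := ((h1.const_mul hI ((u + R) / 2)).add hI (h2.const_mul hI ((u - R) / 2))).add hI
      ((h3 _ hK).const_mul hI (R + |u|))
    exact hconv.setOf_lt_mem_of_le hI (fun n => tsum_mul_le (habs n) hR u) (by linarith)
end

section
/- Let I and J be ideals on ℕ and A = (a_{nk}) an infinite real matrix with Σ_k |a_{nk}| < ∞ for all n, I-lim Σ_k |a_{nk}| = 1 = I-lim Σ_k a_{nk}, and I-lim Σ_k |a_{nk}| χ_E(k) = 0 for every E ∈ J. Then for every bounded real sequence s, I-liminf (As)(n) ≥ J-liminf s_n. -/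
/-- `I-liminf (As) ≥ J-liminf s` for bounded `s`, under conditions (3.1)–(3.3). -/
theorem stmt9 (I J : Set (Set ℕ)) (hI : IsIdeal I) (hJ : IsIdeal J)
    (A : ℕ → ℕ → ℝ) (habs : ∀ n, Summable fun k => |A n k|)
    (h1 : IdealConv I (fun n => ∑' k, |A n k|) 1)
    (h2 : IdealConv I (fun n => ∑' k, A n k) 1)
    (h3 : ∀ E ∈ J, IdealConv I (fun n => ∑' k, |A n k| * E.indicator 1 k) 0)
    (s : ℕ → ℝ) (hbdd : ∃ R : ℝ, ∀ n, |s n| ≤ R) :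
    idealLimInf J s ≤ idealLimInf I (fun n => ∑' k, A n k * s k) := by
  classical
  obtain ⟨R, hR⟩ := hbdd
  have hR0 : 0 ≤ R := le_trans (abs_nonneg _) (hR 0)
  obtain ⟨J0, hJ0⟩ := hJ.1
  have hJe : (∅ : Set ℕ) ∈ J := hJ.2.2.1 J0 hJ0 ∅ (Set.empty_subset _)
  -- superset of complement of an ideal set is not in the ideal
  have key : ∀ X ∈ I, ∀ Y : Set ℕ, Xᶜ ⊆ Y → Y ∉ I := by
    intro X hX Y hXY hY
    refine hI.2.1 (hI.2.2.1 _ (hI.2.2.2 X hX Y hY) _ ?_)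
    intro n _
    by_cases h : n ∈ X
    · exact Or.inl h
    · exact Or.inr (hXY h)
  -- summability facts
  have hsumA : ∀ n, Summable fun k => A n k := fun n => (habs n).of_abs
  have hsumAs : ∀ n, Summable fun k => A n k * s k := by
    intro n
    have h : Summable fun k => |A n k * s k| := by
      refine Summable.of_nonneg_of_le (fun k => abs_nonneg _) (fun k => ?_)
        ((habs n).mul_right R)
      rw [abs_mul]
      exact mul_le_mul_of_nonneg_left (hR k) (abs_nonneg _)
    exact h.of_abs
  -- bound on the transform
  have hAsR : ∀ n, |∑' k, A n k * s k| ≤ R * ∑' k, |A n k| := by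
    intro n
    have h1' : |∑' k, A n k * s k| ≤ ∑' k, |A n k * s k| := by
      have := norm_tsum_le_tsum_norm (f := fun k => A n k * s k) (by
        simpa only [Real.norm_eq_abs] using (hsumAs n).abs)
      simpa only [Real.norm_eq_abs] using this
    have h2' : ∑' k, |A n k * s k| ≤ ∑' k, R * |A n k| := by
      refine Summable.tsum_le_tsum (fun k => ?_) (hsumAs n).abs ((habs n).mul_left R)
      rw [abs_mul, mul_comm]
      exact mul_le_mul_of_nonneg_right (hR k) (abs_nonneg _)
    calc |∑' k, A n k * s k| ≤ ∑' k, R * |A n k| := le_trans h1' h2'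
      _ = R * ∑' k, |A n k| := tsum_mul_left
  -- the defining set of the right-hand side liminf is nonempty
  have hne : {t : ℝ | {n : ℕ | (∑' k, A n k * s k) < t} ∉ I}.Nonempty := by
    refine ⟨2 * R + 1, key _ (h1 1 one_pos) _ ?_⟩
    intro n hn
    simp only [Set.mem_compl_iff, Set.mem_setOf_eq, not_le] at hn
    have h := hAsR n
    have habs1 := abs_lt.mp hn
    have := (abs_le.mp h).2
    have hmul : R * ∑' k, |A n k| ≤ R * 2 := by nlinarith
    show (∑' k, A n k * s k) < 2 * R + 1
    nlinarith
  refine le_csInf hne ?_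
  intro t ht
  simp only [Set.mem_setOf_eq] at ht
  -- main claim: every b < J-liminf s satisfies b ≤ t
  have main : ∀ b : ℝ, b < idealLimInf J s → b ≤ t := by
    intro b hb
    have hXJbdd : BddBelow {u : ℝ | {n : ℕ | s n < u} ∉ J} := by
      refine ⟨-R, fun u hu => ?_⟩
      simp only [Set.mem_setOf_eq] at hu
      rcases Set.eq_empty_or_nonempty {n : ℕ | s n < u} with h | ⟨n, hn⟩
      · exact absurd (h ▸ hJe) hu
      · simp only [Set.mem_setOf_eq] at hn
        have := (abs_le.mp (hR n)).1
        linarith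
    have hE : {k : ℕ | s k < b} ∈ J := by
      by_contra h
      exact absurd (csInf_le hXJbdd h) (not_le.mpr hb)
    set E : Set ℕ := {k : ℕ | s k < b} with hEdef
    set C : ℝ := R + |b| with hCdef
    have hC : 0 ≤ C := by positivity
    refine le_of_forall_pos_le_add ?_
    intro ε hε
    set δ : ℝ := ε / (|b| + 3 * C + 1) with hδdef
    have hden : (0:ℝ) < |b| + 3 * C + 1 := by positivity
    have hδ : 0 < δ := div_pos hε hden
    have hcancel : δ * (|b| + 3 * C + 1) = ε := div_mul_cancel₀ ε (ne_of_gt hden)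
    -- the three ideal sets
    have hS1 := h1 δ hδ
    have hS2 := h2 δ hδ
    have hS3 := h3 E hE δ hδ
    set S : Set ℕ := {n : ℕ | δ ≤ |(∑' k, |A n k|) - 1|} ∪
        ({n : ℕ | δ ≤ |(∑' k, A n k) - 1|} ∪
         {n : ℕ | δ ≤ |(∑' k, |A n k| * E.indicator 1 k) - 0|}) with hSdef
    have hS : S ∈ I := hI.2.2.2 _ hS1 _ (hI.2.2.2 _ hS2 _ hS3)
    -- find n outside S with transform < t
    have hex : ∃ n, (∑' k, A n k * s k) < t ∧ n ∉ S := by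
      by_contra h
      push_neg at h
      refine ht (hI.2.2.1 _ hS _ ?_)
      intro n hn
      exact h n hn
    obtain ⟨n, hnt, hnS⟩ := hex
    simp only [hSdef, Set.mem_union, Set.mem_setOf_eq, not_or, not_le, sub_zero] at hnS
    obtain ⟨hn1, hn2, hn3⟩ := hnS
    -- pointwise inequality
    have hpt : ∀ k, A n k * b - C * (|A n k| - A n k + |A n k| * E.indicator 1 k)
        ≤ A n k * s k := by
      intro k
      have hsk := abs_le.mp (hR k)
      by_cases hk : k ∈ E
      · have hi : E.indicator (1 : ℕ → ℝ) k = 1 := Set.indicator_of_mem hk 1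
        rw [hi]
        rcases abs_cases (A n k) with ⟨ha, ha0⟩ | ⟨ha, ha0⟩ <;> rw [ha] <;>
          nlinarith [neg_abs_le b, le_abs_self b, abs_nonneg b]
      · have hi : E.indicator (1 : ℕ → ℝ) k = 0 := Set.indicator_of_notMem hk 1
        have hsb : b ≤ s k := not_lt.mp hk
        rw [hi]
        rcases abs_cases (A n k) with ⟨ha, ha0⟩ | ⟨ha, ha0⟩ <;> rw [ha] <;>
          nlinarith [neg_abs_le b, le_abs_self b, abs_nonneg b]
    -- summability of the indicator-weighted sum
    have hind : Summable fun k => |A n k| * E.indicator 1 k := by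
      refine Summable.of_nonneg_of_le (fun k => ?_) (fun k => ?_) (habs n)
      · exact mul_nonneg (abs_nonneg _) (Set.indicator_apply_nonneg (fun _ => zero_le_one))
      · by_cases hk : k ∈ E <;>
          simp [Set.indicator_of_mem, Set.indicator_of_notMem, hk]
    have hsumL : Summable fun k =>
        A n k * b - C * (|A n k| - A n k + |A n k| * E.indicator 1 k) :=
      ((hsumA n).mul_right b).sub ((((habs n).sub (hsumA n)).add hind).mul_left C)
    have hsum_le := Summable.tsum_le_tsum hpt hsumL (hsumAs n)
    have hsplit : (∑' k, (A n k * b - C * (|A n k| - A n k + |A n k| * E.indicator 1 k)))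
        = (∑' k, A n k) * b -
          C * ((∑' k, |A n k|) - (∑' k, A n k) + ∑' k, |A n k| * E.indicator 1 k) := by
      rw [Summable.tsum_sub ((hsumA n).mul_right b) ((((habs n).sub (hsumA n)).add hind).mul_left C),
        tsum_mul_right, tsum_mul_left,
        Summable.tsum_add ((habs n).sub (hsumA n)) hind, Summable.tsum_sub (habs n) (hsumA n)]
    rw [hsplit] at hsum_le
    set Sa : ℝ := ∑' k, A n k
    set Sb : ℝ := ∑' k, |A n k|
    set Se : ℝ := ∑' k, |A n k| * E.indicator 1 k
    have hb1 := abs_lt.mp hn1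
    have hb2 := abs_lt.mp hn2
    have hb3 := abs_lt.mp hn3
    -- (Sa - 1) * b ≥ -δ * |b|
    have hSab : -(δ * |b|) ≤ (Sa - 1) * b := by
      rcases abs_cases b with ⟨hab, hb0⟩ | ⟨hab, hb0⟩ <;> rw [hab] <;> nlinarith
    have hCb : C * (Sb - Sa + Se) ≤ C * (3 * δ) :=
      mul_le_mul_of_nonneg_left (by linarith) hC
    have hexp : δ * (|b| + 3 * C) = δ * |b| + C * (3 * δ) := by ring
    have hexp2 : δ * (|b| + 3 * C + 1) = δ * (|b| + 3 * C) + δ := by ring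
    have hfin : b < t + δ * (|b| + 3 * C) := by linarith
    linarith
  by_contra hcon
  push_neg at hcon
  have := main ((t + idealLimInf J s) / 2) (by linarith)
  linarith
end

section
/- Let A = (a_{nk}) be a real infinite matrix with Σ_k |a_{nk}| < ∞ for all n and lim Σ_k a_{nk} = 1 (ordinary limit). Define the family A' = ((a_{nk}^{(i)}))_{i∈ℕ₀} by a_{nk}^{(i)} = a_{n,k−i} for k > i and 0 for k ≤ i. If a bounded real sequence s = (s_n) is A'-summable to a with respect to the ideal I_f of finite sets (i.e., Σ_k a_{nk}^{(i)} s_k → a as n → ∞ uniformly in i ∈ ℕ₀), then s is almost convergent to a, i.e., L(s) = a for every Banach limit L on ℓ^∞. -/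
/-!
A positive functional `L` on `ℓ^∞` with `L 1 = 1` satisfies `|L x| ≤ ‖x‖`, so it is continuous
and commutes with norm-convergent series in `ℓ^∞`. For each row `n` the series
`Tₙ = ∑ₖ A n k • (s shifted by k)` converges in `ℓ^∞`, its `i`-th coordinate is
`∑ₖ A n k * s (k + i)`, and shift invariance gives `L Tₙ = (∑ₖ A n k) * L s`. Uniform
`A'`-summability says `‖Tₙ - a • 1‖ → 0`, hence `(∑ₖ A n k) * L s → a`, while regularity
gives `(∑ₖ A n k) * L s → L s`.
-/

open Filter Topology
open scoped lp ENNReal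

section PositiveFunctional

variable {ι : Type*} {L : ℓ^∞(ι, ℝ) →ₗ[ℝ] ℝ}

theorem abs_le_norm_of_nonneg_of_map_one (hpos : ∀ x : ℓ^∞(ι, ℝ), (∀ n, 0 ≤ x n) → 0 ≤ L x)
    (hone : L 1 = 1) (x : ℓ^∞(ι, ℝ)) : |L x| ≤ ‖x‖ := by
  have hx (i : ι) : |x i| ≤ ‖x‖ := lp.norm_apply_le_norm ENNReal.top_ne_zero x i
  have upper : 0 ≤ L (‖x‖ • 1 - x) := hpos _ fun n => by
    rw [lp.coeFn_sub, lp.coeFn_smul, lp.infty_coeFn_one]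
    simp only [Pi.sub_apply, Pi.smul_apply, Pi.one_apply, smul_eq_mul, mul_one]
    linarith [(abs_le.mp (hx n)).2]
  have lower : 0 ≤ L (‖x‖ • 1 + x) := hpos _ fun n => by
    rw [lp.coeFn_add, lp.coeFn_smul, lp.infty_coeFn_one]
    simp only [Pi.add_apply, Pi.smul_apply, Pi.one_apply, smul_eq_mul, mul_one]
    linarith [(abs_le.mp (hx n)).1]
  simp only [map_sub, map_add, map_smul, hone, smul_eq_mul, mul_one] at upper lower
  exact abs_le.mpr ⟨by linarith, by linarith⟩

theorem map_tsum_of_nonneg_of_map_one (hpos : ∀ x : ℓ^∞(ι, ℝ), (∀ n, 0 ≤ x n) → 0 ≤ L x)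
    (hone : L 1 = 1) {f : ℕ → ℓ^∞(ι, ℝ)} (hf : Summable f) :
    L (∑' k, f k) = ∑' k, L (f k) :=
  (L.mkContinuous 1 fun x => by
    simpa using abs_le_norm_of_nonneg_of_map_one hpos hone x).map_tsum hf

end PositiveFunctional

section Shift

variable {E : Type*} [NormedAddCommGroup E]

def lpShift (k : ℕ) (x : ℓ^∞(ℕ, E)) : ℓ^∞(ℕ, E) :=
  ⟨fun i => x (i + k), memℓp_infty ⟨‖x‖, by
    rintro _ ⟨i, rfl⟩
    exact lp.norm_apply_le_norm ENNReal.top_ne_zero x (i + k)⟩⟩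

@[simp]
theorem lpShift_apply (k : ℕ) (x : ℓ^∞(ℕ, E)) (i : ℕ) : lpShift k x i = x (i + k) := rfl

theorem norm_lpShift_le (k : ℕ) (x : ℓ^∞(ℕ, E)) : ‖lpShift k x‖ ≤ ‖x‖ :=
  lp.norm_le_of_forall_le (norm_nonneg x) fun i =>
    lp.norm_apply_le_norm ENNReal.top_ne_zero x (i + k)

theorem apply_lpShift_of_shift_invariant {β : Type*} {L : ℓ^∞(ℕ, E) → β}
    (hshift : ∀ x y : ℓ^∞(ℕ, E), (∀ n, y n = x (n + 1)) → L y = L x) (k : ℕ)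
    (x : ℓ^∞(ℕ, E)) : L (lpShift k x) = L x := by
  induction k with
  | zero => rfl
  | succ k ih =>
    rw [← ih]
    exact hshift _ _ fun n => by simp only [lpShift_apply, Nat.add_right_comm n 1 k, add_assoc]

end Shift

section WeightedShifts

variable {c : ℕ → ℝ} (hc : Summable fun k => |c k|) (x : ℓ^∞(ℕ, ℝ))
include hc

theorem summable_smul_lpShift : Summable fun k => c k • lpShift k x :=
  Summable.of_norm_bounded (hc.mul_right ‖x‖) fun k => by
    rw [norm_smul, Real.norm_eq_abs]
    exact mul_le_mul_of_nonneg_left (norm_lpShift_le k x) (abs_nonneg _)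

theorem tsum_smul_lpShift_apply (i : ℕ) :
    (∑' k, c k • lpShift k x) i = ∑' k, c k * x (k + i) := by
  have := (lp.evalCLM ℝ (fun _ : ℕ => ℝ) ∞ i).map_tsum (summable_smul_lpShift hc x)
  simpa [lp.evalCLM, add_comm i] using this

theorem map_tsum_smul_lpShift {L : ℓ^∞(ℕ, ℝ) →ₗ[ℝ] ℝ}
    (hpos : ∀ x : ℓ^∞(ℕ, ℝ), (∀ n, 0 ≤ x n) → 0 ≤ L x) (hone : L 1 = 1)
    (hshift : ∀ x y : ℓ^∞(ℕ, ℝ), (∀ n, y n = x (n + 1)) → L y = L x) :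
    L (∑' k, c k • lpShift k x) = (∑' k, c k) * L x := by
  rw [map_tsum_of_nonneg_of_map_one hpos hone (summable_smul_lpShift hc x), ← tsum_mul_right]
  simp only [map_smul, apply_lpShift_of_shift_invariant hshift, smul_eq_mul]

theorem abs_tsum_mul_sub_le {L : ℓ^∞(ℕ, ℝ) →ₗ[ℝ] ℝ}
    (hpos : ∀ x : ℓ^∞(ℕ, ℝ), (∀ n, 0 ≤ x n) → 0 ≤ L x) (hone : L 1 = 1)
    (hshift : ∀ x y : ℓ^∞(ℕ, ℝ), (∀ n, y n = x (n + 1)) → L y = L x) {a ε : ℝ}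
    (hrow : ∀ i, |∑' k, c k * x (k + i) - a| ≤ ε) :
    |(∑' k, c k) * L x - a| ≤ ε := by
  set T := ∑' k, c k • lpShift k x
  calc |(∑' k, c k) * L x - a| = |L (T - a • 1)| := by
        rw [map_sub, map_smul, map_tsum_smul_lpShift hc x hpos hone hshift, hone, smul_eq_mul,
          mul_one]
    _ ≤ ‖T - a • 1‖ := abs_le_norm_of_nonneg_of_map_one hpos hone _
    _ ≤ ε := lp.norm_le_of_forall_le ((abs_nonneg _).trans (hrow 0)) fun i => by
        rw [lp.coeFn_sub, lp.coeFn_smul, lp.infty_coeFn_one]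
        simpa only [Pi.sub_apply, Pi.smul_apply, Pi.one_apply, smul_eq_mul, mul_one,
          Real.norm_eq_abs, T, tsum_smul_lpShift_apply hc] using hrow i

end WeightedShifts

/-- If a bounded sequence `s` is `A'`-summable to `a` (uniformly in the shift parameter
`i`), where `A'` arises by shifting the regular matrix `A`, then `s` is almost convergent
to `a`, i.e. every Banach limit maps it to `a`. -/
theorem stmt16 (A : ℕ → ℕ → ℝ) (habs : ∀ n, Summable fun k => |A n k|)
    (hreg : Filter.Tendsto (fun n => ∑' k, A n k) Filter.atTop (nhds 1))
    (s : ℕ → ℝ) (hs : Memℓp s ⊤) (a : ℝ)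
    (hsum : ∀ ε > (0 : ℝ), ∃ N : ℕ, ∀ n ≥ N, ∀ i : ℕ,
      |(∑' k, A n k * s (k + i)) - a| < ε)
    (L : lp (fun _ : ℕ => ℝ) ⊤ →ₗ[ℝ] ℝ)
    (hpos : ∀ x : lp (fun _ : ℕ => ℝ) ⊤, (∀ n, 0 ≤ x n) → 0 ≤ L x)
    (hshift : ∀ x y : lp (fun _ : ℕ => ℝ) ⊤, (∀ n, y n = x (n + 1)) → L y = L x)
    (hone : ∀ o : lp (fun _ : ℕ => ℝ) ⊤, (∀ n, o n = 1) → L o = 1) :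
    L ⟨s, hs⟩ = a := by
  set S : ℓ^∞(ℕ, ℝ) := ⟨s, hs⟩
  have hL_one : L 1 = 1 := hone 1 fun _ => by rw [lp.infty_coeFn_one, Pi.one_apply]
  have hlim : Tendsto (fun n => (∑' k, A n k) * L S) atTop (𝓝 a) :=
    Metric.tendsto_atTop.2 fun ε hε => by
      obtain ⟨N, hN⟩ := hsum (ε / 2) (half_pos hε)
      exact ⟨N, fun n hn => (abs_tsum_mul_sub_le (habs n) S hpos hL_one hshift
        fun i => (hN n hn i).le).trans_lt (half_lt_self hε)⟩
  have hreg' := hreg.mul_const (L S)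
  rw [one_mul] at hreg'
  exact tendsto_nhds_unique hreg' hlim
end

section
/- Let X be a real or complex Banach space and H ⊆ B_{X*} an (I)-generating set for B_{X*}. Let I be an ideal on ℕ such that F(I) has a countable base, and B = (B_i)_{i∈S} a family of matrices with Σ_k |b_{nk}^{(i)}| < ∞ for all n, i, and M := sup{Σ_k |b_{nk}^{(i)}| : n ∈ ℕ\A, i ∈ S} < ∞ for some A ∈ I. Let (x_n) be a bounded sequence in X and x ∈ X such that for every x* ∈ H, Σ_k b_{nk}^{(i)} x*(x_k) → x*(x) along I uniformly in i ∈ S. Then the same holds for every x* ∈ X*. -/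
/-- The weak*-closure of a set of functionals, computed in the weak* topology. -/
noncomputable def wstarClosure {𝕜 X : Type*} [RCLike 𝕜] [NormedAddCommGroup X]
    [NormedSpace 𝕜 X] (T : Set (StrongDual 𝕜 X)) : Set (StrongDual 𝕜 X) :=
  StrongDual.toWeakDual ⁻¹' closure (StrongDual.toWeakDual '' T)

/-- `H` (I)-generates `K`: whenever `H = ⋃ m, H m` with `H m` increasing, the norm-closure
of the union of the weak*-closed (real) convex hulls of the `H m` equals `K`. -/
def IGenerates {𝕜 X : Type*} [RCLike 𝕜] [NormedAddCommGroup X] [NormedSpace 𝕜 X]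
    (H K : Set (StrongDual 𝕜 X)) : Prop :=
  ∀ Hm : ℕ → Set (StrongDual 𝕜 X), Monotone Hm → (⋃ m, Hm m) = H →
    closure (⋃ m, wstarClosure (convexHull ℝ (Hm m))) = K

/-!
Fix `ε > 0` and an increasing sequence `D m` in `I` absorbing `A` and the countable base of `I`.
Split `H` into the pieces `H m` of functionals whose row deviations `φ ↦ ∑ₖ b_{nk} φ(xₖ) - φ(x)`
stay below `ε / 2` for `n ∉ D m`. On the unit ball each row deviation is a uniform limit of finite
sums, hence weak*-continuous there, so the unit-ball functionals with this property form a convex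
weak*-closed set containing `H m`. By (I)-generation every `f` in the ball is norm-close to such a
functional, and the uniform bound `M` on the row sums makes the row deviations uniformly Lipschitz
off `A`, which gives `ε` for `f`. Scaling passes from the ball to all of `X*`.
-/

open Metric

section Ideal

variable {I : Set (Set ℕ)}

lemma IsIdeal.union_mem_s18 (hI : IsIdeal I) {A B : Set ℕ} (hA : A ∈ I) (hB : B ∈ I) :
    A ∪ B ∈ I :=
  hI.2.2.2 A hA B hB

lemma IsIdeal.exists_monotone_cover (hI : IsIdeal I) {C : ℕ → Set ℕ} (hC : ∀ m, C m ∈ I)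
    {A : Set ℕ} (hA : A ∈ I) :
    ∃ D : ℕ → Set ℕ, Monotone D ∧ (∀ m, D m ∈ I) ∧ (∀ m, A ⊆ D m) ∧ ∀ m, C m ⊆ D m := by
  refine ⟨fun m => A ∪ Set.accumulate C m,
    fun m m' h => Set.union_subset_union_right _ (Set.monotone_accumulate h), fun m => ?_,
    fun m => Set.subset_union_left, fun m => Set.subset_accumulate.trans Set.subset_union_right⟩
  induction m with
  | zero => simpa only [Set.accumulate_zero_nat] using hI.union_mem_s18 hA (hC 0)
  | succ m ih => simpa only [Set.accumulate_succ, ← Set.union_assoc] using hI.union_mem_s18 ih (hC _)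

def UnifTendstoZeroAlong {S F : Type*} [Norm F] (I : Set (Set ℕ)) (s : S → ℕ → F) : Prop :=
  ∀ ε > (0 : ℝ), ∃ E ∈ I, ∀ i, {n | ε ≤ ‖s i n‖} ⊆ E

lemma UnifTendstoZeroAlong.const_smul {S K F : Type*} [NormedField K] [SeminormedAddCommGroup F]
    [NormedSpace K F] {s : S → ℕ → F} (hs : UnifTendstoZeroAlong I s) (r : K) :
    UnifTendstoZeroAlong I fun i n => r • s i n := by
  intro ε hε
  obtain ⟨E, hE, hsE⟩ := hs (ε / (‖r‖ + 1)) (by positivity)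
  refine ⟨E, hE, fun i n hn => hsE i ?_⟩
  have hn : ε ≤ ‖r‖ * ‖s i n‖ := by simpa only [Set.mem_ofPred_eq, norm_smul] using hn
  rw [Set.mem_ofPred_eq, div_le_iff₀ (by positivity)]
  nlinarith [norm_nonneg (s i n)]

end Ideal

section WeakStar

variable {𝕜 X : Type*} [RCLike 𝕜] [NormedAddCommGroup X] [NormedSpace 𝕜 X]

lemma wstarClosure_subset_of_isClosed {s K : Set (StrongDual 𝕜 X)} (hs : s ⊆ K)
    (hK : IsClosed (WeakDual.toStrongDual ⁻¹' K)) : wstarClosure s ⊆ K := by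
  intro φ hφ
  refine closure_minimal (t := WeakDual.toStrongDual ⁻¹' K) ?_ hK hφ
  rintro _ ⟨ψ, hψ, rfl⟩
  exact hs hψ

lemma isClosed_preimage_closedBall_inter_iInter {ι : Type*} (T : ι → StrongDual 𝕜 X →ₗ[ℝ] 𝕜)
    (hT : ∀ j, ContinuousOn (fun ψ : WeakDual 𝕜 X => T j (WeakDual.toStrongDual ψ))
      (WeakDual.toStrongDual ⁻¹' closedBall 0 1)) (ε : ℝ) :
    IsClosed (WeakDual.toStrongDual ⁻¹'
      (closedBall (0 : StrongDual 𝕜 X) 1 ∩ ⋂ j, T j ⁻¹' closedBall 0 ε)) := by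
  have hB := WeakDual.isClosed_closedBall (0 : StrongDual 𝕜 X) 1
  convert hB.inter (isClosed_iInter fun j =>
    (hT j).preimage_isClosed_of_isClosed hB (isClosed_closedBall (x := (0 : 𝕜)) (ε := ε))) using 1
  ext ψ
  simp only [Set.preimage_inter, Set.preimage_iInter, Set.mem_inter_iff, Set.mem_iInter]
  exact ⟨fun h => ⟨h.1, fun j => ⟨h.1, h.2 j⟩⟩, fun h => ⟨h.1, fun j => (h.2 j).2⟩⟩

lemma wstarClosure_convexHull_subset {ι : Type*} (T : ι → StrongDual 𝕜 X →ₗ[ℝ] 𝕜)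
    (hT : ∀ j, ContinuousOn (fun ψ : WeakDual 𝕜 X => T j (WeakDual.toStrongDual ψ))
      (WeakDual.toStrongDual ⁻¹' closedBall 0 1)) {ε : ℝ} {s : Set (StrongDual 𝕜 X)}
    (hs : s ⊆ closedBall 0 1 ∩ ⋂ j, T j ⁻¹' closedBall 0 ε) :
    wstarClosure (convexHull ℝ s) ⊆ closedBall 0 1 ∩ ⋂ j, T j ⁻¹' closedBall 0 ε := by
  refine wstarClosure_subset_of_isClosed (convexHull_min hs ?_)
    (isClosed_preimage_closedBall_inter_iInter T hT ε)
  exact (convex_closedBall 0 1).inter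
    (convex_iInter fun j => (convex_closedBall 0 ε).linear_preimage (T j))

end WeakStar

section RowDeviation

variable {𝕜 X : Type*} [RCLike 𝕜] [NormedAddCommGroup X] [NormedSpace 𝕜 X]
  {c : ℕ → ℝ} {x : ℕ → X} {R : ℝ}

lemma norm_smul_apply_le (hx : ∀ k, ‖x k‖ ≤ R) (φ : StrongDual 𝕜 X) (k : ℕ) :
    ‖c k • φ (x k)‖ ≤ |c k| * (‖φ‖ * R) := by
  rw [norm_smul, Real.norm_eq_abs]
  exact mul_le_mul_of_nonneg_left
    ((φ.le_opNorm (x k)).trans (mul_le_mul_of_nonneg_left (hx k) (norm_nonneg φ))) (abs_nonneg _)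

lemma summable_norm_smul_apply (hc : Summable fun k => |c k|) (hx : ∀ k, ‖x k‖ ≤ R)
    (φ : StrongDual 𝕜 X) : Summable fun k => ‖c k • φ (x k)‖ :=
  .of_nonneg_of_le (fun _ => norm_nonneg _) (norm_smul_apply_le hx φ) (hc.mul_right _)

noncomputable def rowDeviation (hc : Summable fun k => |c k|) (hx : ∀ k, ‖x k‖ ≤ R) (x0 : X) :
    StrongDual 𝕜 X →ₗ[ℝ] 𝕜 where
  toFun φ := (∑' k, c k • φ (x k)) - φ x0
  map_add' φ ψ := by
    simp only [add_apply, smul_add]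
    rw [(summable_norm_smul_apply hc hx φ).of_norm.tsum_add
      (summable_norm_smul_apply hc hx ψ).of_norm]
    abel
  map_smul' r φ := by
    simp only [smul_apply, smul_comm (c _) r, RingHom.id_apply, smul_sub]
    rw [(summable_norm_smul_apply hc hx φ).of_norm.tsum_const_smul r]

variable (hc : Summable fun k => |c k|) (hx : ∀ k, ‖x k‖ ≤ R) (x0 : X)

lemma norm_rowDeviation_le (φ : StrongDual 𝕜 X) :
    ‖rowDeviation hc hx x0 φ‖ ≤ ((∑' k, |c k|) * R + ‖x0‖) * ‖φ‖ := by
  have hsum : ‖∑' k, c k • φ (x k)‖ ≤ (∑' k, |c k|) * R * ‖φ‖ := by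
    refine (norm_tsum_le_tsum_norm (summable_norm_smul_apply hc hx φ)).trans ?_
    calc ∑' k, ‖c k • φ (x k)‖ ≤ ∑' k, |c k| * (‖φ‖ * R) :=
          (summable_norm_smul_apply hc hx φ).tsum_le_tsum (norm_smul_apply_le hx φ)
            (hc.mul_right _)
      _ = (∑' k, |c k|) * R * ‖φ‖ := by rw [tsum_mul_right]; ring
  calc ‖rowDeviation hc hx x0 φ‖ ≤ ‖∑' k, c k • φ (x k)‖ + ‖φ x0‖ := norm_sub_le _ _
    _ ≤ (∑' k, |c k|) * R * ‖φ‖ + ‖φ‖ * ‖x0‖ := add_le_add hsum (φ.le_opNorm x0)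
    _ = ((∑' k, |c k|) * R + ‖x0‖) * ‖φ‖ := by ring

lemma continuousOn_rowDeviation (r : ℝ) :
    ContinuousOn (fun ψ : WeakDual 𝕜 X => rowDeviation hc hx x0 (WeakDual.toStrongDual ψ))
      (WeakDual.toStrongDual ⁻¹' closedBall 0 r) := by
  refine ContinuousOn.sub (continuousOn_tsum (u := fun k => |c k| * (r * R))
    (fun k => ((WeakDual.eval_continuous (x k)).const_smul (c k)).continuousOn)
    (hc.mul_right _) fun k ψ hψ => ?_) (WeakDual.eval_continuous x0).continuousOn
  have hψ : ‖WeakDual.toStrongDual ψ‖ ≤ r := mem_closedBall_zero_iff.1 hψ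
  have hR : 0 ≤ R := (norm_nonneg _).trans (hx 0)
  exact (norm_smul_apply_le hx (WeakDual.toStrongDual ψ) k).trans (by gcongr)

end RowDeviation

section Generation

variable {𝕜 X : Type*} [RCLike 𝕜] [NormedAddCommGroup X] [NormedSpace 𝕜 X] {S : Type*}
  {H : Set (StrongDual 𝕜 X)} {I : Set (Set ℕ)} {T : S → ℕ → StrongDual 𝕜 X →ₗ[ℝ] 𝕜}

lemma IGenerates.unifTendstoZeroAlong_of_mem_closedBall
    (hH : H ⊆ closedBall 0 1) (hgen : IGenerates H (closedBall 0 1)) (hI : IsIdeal I)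
    (hbase : ∃ C : ℕ → Set ℕ, (∀ m, C m ∈ I) ∧ ∀ A ∈ I, ∃ m, A ⊆ C m)
    (hT : ∀ i n, ContinuousOn (fun ψ : WeakDual 𝕜 X => T i n (WeakDual.toStrongDual ψ))
      (WeakDual.toStrongDual ⁻¹' closedBall 0 1))
    (hbound : ∃ A ∈ I, ∃ L, ∀ i, ∀ n ∉ A, ∀ φ, ‖T i n φ‖ ≤ L * ‖φ‖)
    (hconv : ∀ h ∈ H, UnifTendstoZeroAlong I fun i n => T i n h)
    {f : StrongDual 𝕜 X} (hf : f ∈ closedBall 0 1) :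
    UnifTendstoZeroAlong I fun i n => T i n f := by
  intro ε hε
  obtain ⟨A, hA, L, hL⟩ := hbound
  obtain ⟨C, hCI, hC⟩ := hbase
  obtain ⟨D, hDmono, hDI, hAD, hCD⟩ := hI.exists_monotone_cover hCI hA
  let K : ℕ → Set (StrongDual 𝕜 X) := fun m =>
    closedBall 0 1 ∩ ⋂ j : S × ↥(D m)ᶜ, T j.1 j.2 ⁻¹' closedBall 0 (ε / 2)
  have hKmono : Monotone K := by
    intro m m' hmm φ hφ
    refine ⟨hφ.1, Set.mem_iInter.2 fun j => ?_⟩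
    exact Set.mem_iInter.1 hφ.2 (j.1, ⟨j.2, fun h => j.2.2 (hDmono hmm h)⟩)
  have hHK : (⋃ m, H ∩ K m) = H := by
    refine (Set.iUnion_subset fun m => Set.inter_subset_left).antisymm fun h hh => ?_
    obtain ⟨E, hE, hsE⟩ := hconv h hh (ε / 2) (half_pos hε)
    obtain ⟨m, hEm⟩ := hC E hE
    refine Set.mem_iUnion.2 ⟨m, hh, hH hh, Set.mem_iInter.2 fun j => ?_⟩
    refine mem_closedBall_zero_iff.2 (le_of_lt (not_le.1 fun hj => j.2.2 ?_))
    exact hCD m (hEm (hsE j.1 hj))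
  have hfK : f ∈ closure (⋃ m, K m) := by
    rw [← hgen _ (fun m m' h => Set.inter_subset_inter_right _ (hKmono h)) hHK] at hf
    exact closure_mono (Set.iUnion_mono fun m =>
      wstarClosure_convexHull_subset _ (fun j => hT _ _) Set.inter_subset_right) hf
  obtain ⟨g, hg, hfg⟩ := Metric.mem_closure_iff.1 hfK (ε / (2 * (|L| + 1))) (by positivity)
  obtain ⟨m, hgm⟩ := Set.mem_iUnion.1 hg
  refine ⟨D m, hDI m, fun i n hn => by_contra fun hnD => ?_⟩
  have hTg : ‖T i n g‖ ≤ ε / 2 :=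
    mem_closedBall_zero_iff.1 (Set.mem_iInter.1 hgm.2 (i, ⟨n, hnD⟩))
  have hTfg : ‖T i n (f - g)‖ < ε / 2 := calc
    ‖T i n (f - g)‖ ≤ L * ‖f - g‖ := hL i n (fun h => hnD (hAD m h)) _
    _ ≤ (|L| + 1) * ‖f - g‖ := by gcongr; linarith [le_abs_self L]
    _ < (|L| + 1) * (ε / (2 * (|L| + 1))) := by gcongr; rwa [← dist_eq_norm]
    _ = ε / 2 := by field_simp
  have hTf : ‖T i n f‖ < ε := calc
    ‖T i n f‖ = ‖T i n g + T i n (f - g)‖ := by rw [← map_add, add_sub_cancel]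
    _ ≤ ‖T i n g‖ + ‖T i n (f - g)‖ := norm_add_le _ _
    _ < ε := by linarith
  exact hTf.not_ge hn

lemma IGenerates.unifTendstoZeroAlong
    (hH : H ⊆ closedBall 0 1) (hgen : IGenerates H (closedBall 0 1)) (hI : IsIdeal I)
    (hbase : ∃ C : ℕ → Set ℕ, (∀ m, C m ∈ I) ∧ ∀ A ∈ I, ∃ m, A ⊆ C m)
    (hT : ∀ i n, ContinuousOn (fun ψ : WeakDual 𝕜 X => T i n (WeakDual.toStrongDual ψ))
      (WeakDual.toStrongDual ⁻¹' closedBall 0 1))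
    (hbound : ∃ A ∈ I, ∃ L, ∀ i, ∀ n ∉ A, ∀ φ, ‖T i n φ‖ ≤ L * ‖φ‖)
    (hconv : ∀ h ∈ H, UnifTendstoZeroAlong I fun i n => T i n h) (f : StrongDual 𝕜 X) :
    UnifTendstoZeroAlong I fun i n => T i n f := by
  have hr : 0 < ‖f‖ + 1 := by positivity
  have hu : (‖f‖ + 1)⁻¹ • f ∈ closedBall 0 1 := by
    rw [mem_closedBall_zero_iff, norm_smul, Real.norm_eq_abs, abs_inv, abs_of_pos hr,
      inv_mul_le_iff₀ hr]
    linarith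
  have hscaled :=
    (hgen.unifTendstoZeroAlong_of_mem_closedBall hH hI hbase hT hbound hconv hu).const_smul (‖f‖ + 1)
  simpa only [← map_smul, smul_inv_smul₀ hr.ne'] using hscaled

end Generation

theorem stmt18_general {𝕜 X : Type*} [RCLike 𝕜] [NormedAddCommGroup X] [NormedSpace 𝕜 X]
    {S : Type*}
    (H : Set (StrongDual 𝕜 X))
    (hH : H ⊆ Metric.closedBall (0 : StrongDual 𝕜 X) 1)
    (hgen : IGenerates H (Metric.closedBall (0 : StrongDual 𝕜 X) 1))
    (I : Set (Set ℕ)) (hI : IsIdeal I)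
    (hbase : ∃ C : ℕ → Set ℕ, (∀ m, C m ∈ I) ∧ ∀ A ∈ I, ∃ m, A ⊆ C m)
    (b : S → ℕ → ℕ → ℝ)
    (habs : ∀ (i : S) (n : ℕ), Summable fun k => |b i n k|)
    (hM : ∃ A ∈ I, ∃ M : ℝ, ∀ (i : S), ∀ n ∉ A, ∑' k, |b i n k| ≤ M)
    (x : ℕ → X) (hbdd : ∃ R : ℝ, ∀ n, ‖x n‖ ≤ R) (x0 : X)
    (hH_conv : ∀ f ∈ H, ∀ ε > (0 : ℝ), ∃ E ∈ I, ∀ i : S,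
      {n : ℕ | ε ≤ ‖(∑' k, b i n k • f (x k)) - f x0‖} ⊆ E) :
    ∀ f : StrongDual 𝕜 X, ∀ ε > (0 : ℝ), ∃ E ∈ I, ∀ i : S,
      {n : ℕ | ε ≤ ‖(∑' k, b i n k • f (x k)) - f x0‖} ⊆ E := by
  obtain ⟨R, hxR⟩ := hbdd
  obtain ⟨A, hA, M, hM⟩ := hM
  have hR : 0 ≤ R := (norm_nonneg _).trans (hxR 0)
  refine hgen.unifTendstoZeroAlong (T := fun i n => rowDeviation (habs i n) hxR x0) hH hI hbase
    (fun i n => continuousOn_rowDeviation _ _ _ 1) ⟨A, hA, M * R + ‖x0‖, fun i n hn φ => ?_⟩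
    hH_conv
  refine (norm_rowDeviation_le _ _ _ φ).trans ?_
  gcongr
  exact hM i n hn

/-- Rainwater–Simons-type theorem for `B^I`-summability: if the `B^I`-transforms of
`(x*(xₙ))` converge to `x*(x)` for every `x*` in an (I)-generating subset `H` of the dual
unit ball, then the same holds for every `x* ∈ X*`. -/
theorem stmt18 {𝕜 X : Type*} [RCLike 𝕜] [NormedAddCommGroup X] [NormedSpace 𝕜 X]
    [CompleteSpace X] {S : Type*} [Nonempty S]
    (H : Set (StrongDual 𝕜 X))
    (hH : H ⊆ Metric.closedBall (0 : StrongDual 𝕜 X) 1)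
    (hgen : IGenerates H (Metric.closedBall (0 : StrongDual 𝕜 X) 1))
    (I : Set (Set ℕ)) (hI : IsIdeal I)
    (hbase : ∃ C : ℕ → Set ℕ, (∀ m, C m ∈ I) ∧ ∀ A ∈ I, ∃ m, A ⊆ C m)
    (b : S → ℕ → ℕ → ℝ)
    (habs : ∀ (i : S) (n : ℕ), Summable fun k => |b i n k|)
    (hM : ∃ A ∈ I, ∃ M : ℝ, ∀ (i : S), ∀ n ∉ A, ∑' k, |b i n k| ≤ M)
    (x : ℕ → X) (hbdd : ∃ R : ℝ, ∀ n, ‖x n‖ ≤ R) (x0 : X)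
    (hH_conv : ∀ f ∈ H, ∀ ε > (0 : ℝ), ∃ E ∈ I, ∀ i : S,
      {n : ℕ | ε ≤ ‖(∑' k, b i n k • f (x k)) - f x0‖} ⊆ E) :
    ∀ f : StrongDual 𝕜 X, ∀ ε > (0 : ℝ), ∃ E ∈ I, ∀ i : S,
      {n : ℕ | ε ≤ ‖(∑' k, b i n k • f (x k)) - f x0‖} ⊆ E :=
  stmt18_general H hH hgen I hI hbase b habs hM x hbdd x0 hH_conv
end
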